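/- arXiv:1309.2388 — 2 statements merged into one kernel-verified Lean document; each statement's English description precedes it below -/
import Mathlib

section
/- If f : ℝ^p → ℝ is convex and differentiable with L-Lipschitz gradient, then for all x, y: ‖f'(x) - f'(y)‖² ≤ 2L·(f(x) - f(y) - ⟨f'(y), x - y⟩). -/
open scoped RealInnerProductSpace
open Set Filter Topology

private lemma line_deriv {p : ℕ}
    (f : EuclideanSpace ℝ (Fin p) → ℝ)
    (f' : EuclideanSpace ℝ (Fin p) → EuclideanSpace ℝ (Fin p))
    (hdiff : ∀ x, HasGradientAt f (f' x) x)
    (z v : EuclideanSpace ℝ (Fin p)) (t : ℝ) :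
    HasDerivAt (fun s : ℝ => f (z + s • v)) ⟪f' (z + t • v), v⟫ t := by
  have h1 : HasDerivAt (fun s : ℝ => z + s • v) v t := by
    simpa using ((hasDerivAt_id t).smul_const v).const_add z
  have h2 := hdiff (z + t • v)
  rw [hasGradientAt_iff_hasFDerivAt] at h2
  have h3 := h2.comp_hasDerivAt t h1
  simp [InnerProductSpace.toDual_apply_apply] at h3
  exact h3

/-- Descent lemma. -/
private lemma descent {p : ℕ}
    (f : EuclideanSpace ℝ (Fin p) → ℝ)
    (f' : EuclideanSpace ℝ (Fin p) → EuclideanSpace ℝ (Fin p))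
    (L : ℝ) (hL : 0 < L)
    (hdiff : ∀ x, HasGradientAt f (f' x) x)
    (hlip : ∀ x y, ‖f' x - f' y‖ ≤ L * ‖x - y‖) :
    ∀ z u, f u ≤ f z + ⟪f' z, u - z⟫ + L / 2 * ‖u - z‖ ^ 2 := by
  intro z u
  set v := u - z with hv
  set ψ : ℝ → ℝ := fun t => f (z + t • v) - t * ⟪f' z, v⟫ - L / 2 * t ^ 2 * ‖v‖ ^ 2 with hψ
  have hψd : ∀ t : ℝ, HasDerivAt ψ
      (⟪f' (z + t • v), v⟫ - ⟪f' z, v⟫ - L / 2 * (2 * t) * ‖v‖ ^ 2) t := by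
    intro t
    have h1 := line_deriv f f' hdiff z v t
    have h2 : HasDerivAt (fun s : ℝ => s * ⟪f' z, v⟫) ⟪f' z, v⟫ t := by
      simpa using (hasDerivAt_id t).mul_const ⟪f' z, v⟫
    have h3 : HasDerivAt (fun s : ℝ => L / 2 * s ^ 2 * ‖v‖ ^ 2)
        (L / 2 * (2 * t) * ‖v‖ ^ 2) t := by
      have := ((hasDerivAt_pow 2 t).const_mul (L / 2)).mul_const (‖v‖ ^ 2)
      simpa [mul_comm, mul_assoc, mul_left_comm] using this
    exact (h1.sub h2).sub h3
  have hmono : AntitoneOn ψ (Icc (0 : ℝ) 1) := by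
    apply antitoneOn_of_deriv_nonpos (convex_Icc 0 1)
    · exact fun t _ => ((hψd t).continuousAt).continuousWithinAt
    · exact fun t _ => ((hψd t).differentiableAt).differentiableWithinAt
    · intro t ht
      rw [interior_Icc] at ht
      rw [(hψd t).deriv]
      have key : ⟪f' (z + t • v) - f' z, v⟫ ≤ L * t * ‖v‖ ^ 2 := by
        calc ⟪f' (z + t • v) - f' z, v⟫ ≤ ‖f' (z + t • v) - f' z‖ * ‖v‖ :=
              real_inner_le_norm _ _
          _ ≤ (L * ‖(z + t • v) - z‖) * ‖v‖ := by
              have := hlip (z + t • v) z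
              exact mul_le_mul_of_nonneg_right this (norm_nonneg _)
          _ = L * t * ‖v‖ ^ 2 := by
              simp only [add_sub_cancel_left, norm_smul, Real.norm_eq_abs,
                abs_of_pos ht.1]
              ring
      have : ⟪f' (z + t • v), v⟫ - ⟪f' z, v⟫ = ⟪f' (z + t • v) - f' z, v⟫ := by
        rw [inner_sub_left]
      rw [this]
      nlinarith [key]
  have h01 := hmono (left_mem_Icc.2 zero_le_one) (right_mem_Icc.2 zero_le_one) zero_le_one
  simp only [hψ, one_smul, zero_smul, add_zero, one_pow, mul_one, one_mul, zero_pow,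
    mul_zero, zero_mul, sub_zero] at h01
  have : z + v = u := by simp [hv]
  rw [this] at h01
  linarith

/-- First-order condition for convexity. -/
private lemma foc {p : ℕ}
    (f : EuclideanSpace ℝ (Fin p) → ℝ)
    (f' : EuclideanSpace ℝ (Fin p) → EuclideanSpace ℝ (Fin p))
    (hconv : ConvexOn ℝ Set.univ f)
    (hdiff : ∀ x, HasGradientAt f (f' x) x) :
    ∀ y z, f y + ⟪f' y, z - y⟫ ≤ f z := by
  intro y z
  set v := z - y with hv
  set φ : ℝ → ℝ := fun t => f (y + t • v) with hφ
  have hd : HasDerivAt φ ⟪f' y, v⟫ 0 := by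
    have := line_deriv f f' hdiff y v 0
    simpa using this
  have hslope : ∀ᶠ t in 𝓝[>] (0 : ℝ), slope φ 0 t ≤ f z - f y := by
    filter_upwards [Ioo_mem_nhdsGT_of_mem (show (0:ℝ) ∈ Ico (0:ℝ) 1 by simp)] with t ht
    have hconvineq := hconv.2 (mem_univ y) (mem_univ z)
      (by linarith [ht.1, ht.2] : (0:ℝ) ≤ 1 - t) (le_of_lt ht.1) (by ring)
    have heq : (1 - t) • y + t • z = y + t • v := by
      simp only [hv]; module
    rw [heq] at hconvineq
    have : φ t - φ 0 ≤ t * (f z - f y) := by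
      simp only [hφ, zero_smul, add_zero, smul_eq_mul] at hconvineq ⊢
      nlinarith [hconvineq]
    rw [slope_def_field, sub_zero, div_le_iff₀ ht.1]
    simp only [hφ, zero_smul, add_zero] at this ⊢
    nlinarith [this]
  have htend : Tendsto (slope φ 0) (𝓝[>] (0:ℝ)) (𝓝 ⟪f' y, v⟫) :=
    (hasDerivAt_iff_tendsto_slope.1 hd).mono_left
      (nhdsWithin_mono _ (fun t ht => ne_of_gt ht))
  have := le_of_tendsto htend hslope
  linarith

theorem stmt1 {p : ℕ}
    (f : EuclideanSpace ℝ (Fin p) → ℝ)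
    (f' : EuclideanSpace ℝ (Fin p) → EuclideanSpace ℝ (Fin p))
    (L : ℝ) (hL : 0 < L)
    (hconv : ConvexOn ℝ Set.univ f)
    (hdiff : ∀ x, HasGradientAt f (f' x) x)
    (hlip : ∀ x y, ‖f' x - f' y‖ ≤ L * ‖x - y‖) :
    ∀ x y, ‖f' x - f' y‖ ^ 2 ≤ 2 * L * (f x - f y - ⟪f' y, x - y⟫) := by
  intro x y
  set v := f' x - f' y with hv
  set u := x - (1 / L) • v with hu
  have h1 : f u ≤ f x + ⟪f' x, u - x⟫ + L / 2 * ‖u - x‖ ^ 2 :=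
    descent f f' L hL hdiff hlip x u
  have h2 : f y + ⟪f' y, u - y⟫ ≤ f u := foc f f' hconv hdiff y u
  have hux : u - x = -((1 / L) • v) := by simp [hu]
  have hinner1 : ⟪f' x, u - x⟫ = -(1 / L) * ⟪f' x, v⟫ := by
    rw [hux, inner_neg_right, real_inner_smul_right]; ring
  have hnorm : ‖u - x‖ ^ 2 = (1 / L) ^ 2 * ‖v‖ ^ 2 := by
    rw [hux, norm_neg, norm_smul]
    simp [abs_of_pos (show (0:ℝ) < 1/L by positivity), mul_pow]
  have hinner2 : ⟪f' y, u - y⟫ = ⟪f' y, x - y⟫ - (1 / L) * ⟪f' y, v⟫ := by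
    have : u - y = (x - y) - (1 / L) • v := by simp [hu]; abel
    rw [this, inner_sub_right, real_inner_smul_right]
  have hvv : ⟪f' x, v⟫ - ⟪f' y, v⟫ = ‖v‖ ^ 2 := by
    rw [← inner_sub_left, ← hv, real_inner_self_eq_norm_sq]
  have hLne : L ≠ 0 := ne_of_gt hL
  have e1 : L / 2 * ((1 / L) ^ 2 * ‖v‖ ^ 2) = (1 / (2 * L)) * ‖v‖ ^ 2 := by
    field_simp
  have e2 : (1 / L) * ⟪f' x, v⟫ - (1 / L) * ⟪f' y, v⟫ = (1 / L) * ‖v‖ ^ 2 := by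
    rw [← mul_sub, hvv]
  have e3 : (1 / L) * ‖v‖ ^ 2 - 1 / (2 * L) * ‖v‖ ^ 2 = 1 / (2 * L) * ‖v‖ ^ 2 := by
    field_simp; ring
  have key : f y + ⟪f' y, x - y⟫ + (1 / (2 * L)) * ‖v‖ ^ 2 ≤ f x := by
    rw [hinner1, hnorm] at h1
    rw [hinner2] at h2
    linarith [h1, h2, e1, e2, e3]
  have h2L : (0:ℝ) < 2 * L := by linarith
  have hmul := mul_le_mul_of_nonneg_left
    (show 1 / (2 * L) * ‖v‖ ^ 2 ≤ f x - f y - ⟪f' y, x - y⟫ by linarith) (le_of_lt h2L)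
  have hfin : 2 * L * (1 / (2 * L) * ‖v‖ ^ 2) = ‖v‖ ^ 2 := by field_simp
  linarith [hmul, hfin]
end

section
/- If f_i are convex with L-Lipschitz gradients, g = (1/n)∑ f_i has minimizer x*, and y_i^0 = f_i'(x^0) - g'(x^0) for each i, then ∑_{i=1}^n ‖y_i^0 - f_i'(x*)‖² ≤ 8nL(g(x^0) - g(x*)). -/
open Set InnerProductSpace RealInnerProductSpace

variable {F : Type*} [NormedAddCommGroup F] [InnerProductSpace ℝ F] [CompleteSpace F]

lemma hasDerivAt_line (f : F → ℝ) (f' : F → F) (hdiff : ∀ x, HasGradientAt f (f' x) x)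
    (x v : F) (t : ℝ) :
    HasDerivAt (fun s : ℝ => f (x + s • v)) ⟪f' (x + t • v), v⟫_ℝ t := by
  have h1 : HasDerivAt (fun s : ℝ => x + s • v) v t := by
    simpa using ((hasDerivAt_id t).smul_const v).const_add x
  have h2 : HasFDerivAt f (toDual ℝ F (f' (x + t • v))) (x + t • v) := hdiff _
  exact h2.comp_hasDerivAt t h1

lemma grad_lower (f : F → ℝ) (f' : F → F) (hconv : ConvexOn ℝ Set.univ f)
    (hdiff : ∀ x, HasGradientAt f (f' x) x) (x y : F) :
    ⟪f' y, x - y⟫_ℝ ≤ f x - f y := by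
  have hd : HasDerivAt (fun s : ℝ => f (y + s • (x - y))) ⟪f' y, x - y⟫_ℝ 0 := by
    simpa using hasDerivAt_line f f' hdiff y (x - y) 0
  have hconvh : ConvexOn ℝ Set.univ (fun s : ℝ => f (y + s • (x - y))) := by
    have h := hconv.comp_affineMap (AffineMap.lineMap y x : ℝ →ᵃ[ℝ] F)
    have heq : (f ∘ ⇑(AffineMap.lineMap y x)) = fun s : ℝ => f (y + s • (x - y)) := by
      funext s
      simp [Function.comp, AffineMap.lineMap_apply, vsub_eq_sub, vadd_eq_add, add_comm]
    rw [heq] at h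
    simpa using h
  have := hconvh.le_slope_of_hasDerivAt (mem_univ (0:ℝ)) (mem_univ (1:ℝ)) one_pos hd
  simpa [slope_def_field] using this

lemma descent_lemma (f : F → ℝ) (f' : F → F) {L : ℝ} (hL0 : 0 ≤ L)
    (hdiff : ∀ x, HasGradientAt f (f' x) x)
    (hlip : ∀ x y, ‖f' x - f' y‖ ≤ L * ‖x - y‖) (x z : F) :
    f z ≤ f x + ⟪f' x, z - x⟫_ℝ + L * ‖z - x‖ ^ 2 := by
  set v := z - x with hv
  set h : ℝ → ℝ := fun s => f (x + s • v) - s * ⟪f' x, v⟫_ℝ with hh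
  have hd : ∀ t : ℝ, HasDerivAt h (⟪f' (x + t • v) - f' x, v⟫_ℝ) t := by
    intro t
    have h1 := hasDerivAt_line f f' hdiff x v t
    have h2 : HasDerivAt (fun s : ℝ => s * ⟪f' x, v⟫_ℝ) ⟪f' x, v⟫_ℝ t := by
      simpa using (hasDerivAt_id t).mul_const ⟪f' x, v⟫_ℝ
    exact (h1.sub h2).congr_deriv (by simp [inner_sub_left])
  have hbound : ∀ t ∈ Set.Icc (0:ℝ) 1, ‖⟪f' (x + t • v) - f' x, v⟫_ℝ‖ ≤ L * ‖v‖ ^ 2 := by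
    intro t ht
    have h1 : ‖⟪f' (x + t • v) - f' x, v⟫_ℝ‖ ≤ ‖f' (x + t • v) - f' x‖ * ‖v‖ :=
      norm_inner_le_norm _ _
    have h2 : ‖f' (x + t • v) - f' x‖ ≤ L * ‖t • v‖ := by
      simpa using hlip (x + t • v) x
    have h3 : ‖t • v‖ ≤ ‖v‖ := by
      rw [norm_smul]
      have : |t| ≤ 1 := abs_le.2 ⟨by linarith [ht.1], ht.2⟩
      calc ‖t‖ * ‖v‖ ≤ 1 * ‖v‖ := by
              apply mul_le_mul_of_nonneg_right _ (norm_nonneg v)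
              simpa [Real.norm_eq_abs] using this
        _ = ‖v‖ := one_mul _
    calc ‖⟪f' (x + t • v) - f' x, v⟫_ℝ‖ ≤ ‖f' (x + t • v) - f' x‖ * ‖v‖ := h1
      _ ≤ (L * ‖v‖) * ‖v‖ := by
          apply mul_le_mul_of_nonneg_right _ (norm_nonneg v)
          exact h2.trans (by nlinarith [norm_nonneg v])
      _ = L * ‖v‖ ^ 2 := by ring
  have key : ‖h 1 - h 0‖ ≤ L * ‖v‖ ^ 2 * ‖(1:ℝ) - 0‖ := by
    apply (convex_Icc (0:ℝ) 1).norm_image_sub_le_of_norm_hasDerivWithin_le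
      (fun t ht => (hd t).hasDerivWithinAt) hbound (Set.left_mem_Icc.2 zero_le_one)
      (Set.right_mem_Icc.2 zero_le_one)
  have h1 : h 1 = f z - ⟪f' x, v⟫_ℝ := by simp [hh, hv]
  have h0 : h 0 = f x := by simp [hh]
  rw [h1, h0] at key
  simp only [sub_zero, norm_one, mul_one] at key
  have := (le_abs_self (f z - ⟪f' x, v⟫_ℝ - f x)).trans (by simpa [Real.norm_eq_abs] using key)
  linarith

lemma coco (f : F → ℝ) (f' : F → F) {L : ℝ} (hL : 0 ≤ L)
    (hconv : ConvexOn ℝ Set.univ f)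
    (hdiff : ∀ x, HasGradientAt f (f' x) x)
    (hlip : ∀ x y, ‖f' x - f' y‖ ≤ L * ‖x - y‖) (x y : F) :
    ‖f' x - f' y‖ ^ 2 ≤ 4 * L * (f x - f y - ⟪f' y, x - y⟫_ℝ) := by
  rcases eq_or_lt_of_le hL with hL0 | hLpos
  · have h1 : ‖f' x - f' y‖ ≤ 0 := by
      have := hlip x y; rw [← hL0] at this; simpa using this
    have h2 := grad_lower f f' hconv hdiff x y
    have h3 : ‖f' x - f' y‖ = 0 := le_antisymm h1 (norm_nonneg _)
    rw [h3, ← hL0]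
    simp
  · set u := f' x - f' y with hu
    set c : ℝ := 1 / (2 * L) with hc
    set z := x - c • u with hz
    have hB := grad_lower f f' hconv hdiff z y
    have hA := descent_lemma f f' hL hdiff hlip x z
    have hzx : z - x = -(c • u) := by rw [hz]; abel
    have h1 : ⟪f' x, z - x⟫_ℝ = -(c * ⟪f' x, u⟫_ℝ) := by
      rw [hzx, inner_neg_right, real_inner_smul_right]
    have h2 : ‖z - x‖ ^ 2 = c ^ 2 * ‖u‖ ^ 2 := by
      rw [hzx, norm_neg, norm_smul, mul_pow, Real.norm_eq_abs, sq_abs]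
    have h3 : ⟪f' y, z - y⟫_ℝ = ⟪f' y, x - y⟫_ℝ - c * ⟪f' y, u⟫_ℝ := by
      have : z - y = (x - y) - c • u := by rw [hz]; abel
      rw [this, inner_sub_right, real_inner_smul_right]
    have h4 : ⟪f' x, u⟫_ℝ - ⟪f' y, u⟫_ℝ = ‖u‖ ^ 2 := by
      rw [← inner_sub_left, ← hu, real_inner_self_eq_norm_sq]
    have key : c * ‖u‖ ^ 2 - L * c ^ 2 * ‖u‖ ^ 2 ≤ f x - f y - ⟪f' y, x - y⟫_ℝ := by
      rw [h1, h2] at hA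
      rw [h3] at hB
      have h4c : c * ⟪f' x, u⟫_ℝ - c * ⟪f' y, u⟫_ℝ = c * ‖u‖ ^ 2 := by
        rw [← mul_sub, h4]
      nlinarith [h4c]
    have h5 : 4 * L * (c * ‖u‖ ^ 2 - L * c ^ 2 * ‖u‖ ^ 2) = ‖u‖ ^ 2 := by
      rw [hc]; field_simp; ring
    calc ‖u‖ ^ 2 = 4 * L * (c * ‖u‖ ^ 2 - L * c ^ 2 * ‖u‖ ^ 2) := h5.symm
      _ ≤ 4 * L * (f x - f y - ⟪f' y, x - y⟫_ℝ) := by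
          apply mul_le_mul_of_nonneg_left key (by linarith)

theorem stmt2 {p n : ℕ} (hn : 0 < n)
    (f : Fin n → EuclideanSpace ℝ (Fin p) → ℝ)
    (f' : Fin n → EuclideanSpace ℝ (Fin p) → EuclideanSpace ℝ (Fin p))
    (L : ℝ) (hL : 0 ≤ L)
    (hconv : ∀ i, ConvexOn ℝ Set.univ (f i))
    (hdiff : ∀ i x, HasGradientAt (f i) (f' i x) x)
    (hlip : ∀ i x y, ‖f' i x - f' i y‖ ≤ L * ‖x - y‖)
    (g : EuclideanSpace ℝ (Fin p) → ℝ)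
    (hg : g = fun x => (1 / n : ℝ) * ∑ i, f i x)
    (g' : EuclideanSpace ℝ (Fin p) → EuclideanSpace ℝ (Fin p))
    (hg' : ∀ x, g' x = (1 / n : ℝ) • ∑ i, f' i x)
    (xs : EuclideanSpace ℝ (Fin p)) (hmin : ∀ x, g xs ≤ g x)
    (x0 : EuclideanSpace ℝ (Fin p))
    (y0 : Fin n → EuclideanSpace ℝ (Fin p))
    (hy0 : ∀ i, y0 i = f' i x0 - g' x0) :
    ∑ i, ‖y0 i - f' i xs‖ ^ 2 ≤ 8 * n * L * (g x0 - g xs) := by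
  have hn' : (n : ℝ) ≠ 0 := Nat.cast_ne_zero.2 hn.ne'
  -- g has gradient g'
  have hgdiff : ∀ x, HasGradientAt g (g' x) x := by
    intro x
    have hsum : HasFDerivAt (fun x => ∑ i, f i x)
        (∑ i, toDual ℝ (EuclideanSpace ℝ (Fin p)) (f' i x)) x :=
      HasFDerivAt.fun_sum (fun i _ => (hdiff i x).hasFDerivAt)
    have hmul := hsum.const_mul (1 / n : ℝ)
    rw [hasGradientAt_iff_hasFDerivAt, hg]
    refine hmul.congr_fderiv ?_
    simp [hg' x, map_smul, map_sum]
  -- gradient at minimum is zero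
  have hgs : g' xs = 0 := by
    have hloc : IsLocalMin g xs := Filter.Eventually.of_forall hmin
    have h0 := hloc.hasFDerivAt_eq_zero (hgdiff xs).hasFDerivAt
    have := (toDual ℝ (EuclideanSpace ℝ (Fin p))).map_eq_zero_iff.1 (by rw [h0])
    exact this
  have hsum_fs : ∑ i, f' i xs = 0 := by
    have := hg' xs
    rw [hgs] at this
    have h2 := this.symm
    rcases smul_eq_zero.1 h2 with h | h
    · exact absurd h (by simp [hn'])
    · exact h
  set d : Fin n → EuclideanSpace ℝ (Fin p) := fun i => f' i x0 - f' i xs with hd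
  set m := g' x0 with hm
  have hsum_d : ∑ i, d i = (n : ℝ) • m := by
    rw [hd]
    simp only []
    rw [Finset.sum_sub_distrib, hsum_fs, sub_zero, hm, hg' x0, smul_smul]
    rw [mul_one_div, div_self hn', one_smul]
  -- rewrite the summands
  have hterm : ∀ i, y0 i - f' i xs = d i - m := by
    intro i
    rw [hy0 i, hd, hm]
    simp only []
    abel
  -- variance inequality
  have hvar : ∑ i, ‖d i - m‖ ^ 2 ≤ ∑ i, ‖d i‖ ^ 2 := by
    have hexp : ∀ i : Fin n, ‖d i - m‖ ^ 2 = ‖d i‖ ^ 2 - 2 * ⟪d i, m⟫_ℝ + ‖m‖ ^ 2 :=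
      fun i => norm_sub_sq_real (d i) m
    have hsum_inner : ∑ i, ⟪d i, m⟫_ℝ = (n : ℝ) * ‖m‖ ^ 2 := by
      rw [← sum_inner, hsum_d, real_inner_smul_left, real_inner_self_eq_norm_sq]
    calc ∑ i, ‖d i - m‖ ^ 2
        = ∑ i, (‖d i‖ ^ 2 - 2 * ⟪d i, m⟫_ℝ + ‖m‖ ^ 2) := Finset.sum_congr rfl (fun i _ => hexp i)
      _ = ∑ i, ‖d i‖ ^ 2 - 2 * ∑ i, ⟪d i, m⟫_ℝ + (n : ℝ) * ‖m‖ ^ 2 := by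
          rw [Finset.sum_add_distrib, Finset.sum_sub_distrib, Finset.mul_sum,
            Finset.sum_const, Finset.card_univ, Fintype.card_fin, nsmul_eq_mul]
      _ = ∑ i, ‖d i‖ ^ 2 - (n : ℝ) * ‖m‖ ^ 2 := by rw [hsum_inner]; ring
      _ ≤ ∑ i, ‖d i‖ ^ 2 := by nlinarith [sq_nonneg ‖m‖, Nat.cast_nonneg (α := ℝ) n]
  -- cocoercivity summed
  have hco : ∑ i, ‖d i‖ ^ 2 ≤ 4 * n * L * (g x0 - g xs) := by
    have hstep : ∀ i : Fin n, ‖d i‖ ^ 2 ≤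
        4 * L * (f i x0 - f i xs - ⟪f' i xs, x0 - xs⟫_ℝ) := by
      intro i
      exact coco (f i) (f' i) hL (hconv i) (hdiff i) (hlip i) x0 xs
    calc ∑ i, ‖d i‖ ^ 2 ≤ ∑ i, 4 * L * (f i x0 - f i xs - ⟪f' i xs, x0 - xs⟫_ℝ) :=
          Finset.sum_le_sum (fun i _ => hstep i)
      _ = 4 * L * ((∑ i, f i x0) - (∑ i, f i xs) - ⟪∑ i, f' i xs, x0 - xs⟫_ℝ) := by
          rw [← Finset.mul_sum, Finset.sum_sub_distrib, Finset.sum_sub_distrib, sum_inner]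
      _ = 4 * L * ((∑ i, f i x0) - (∑ i, f i xs)) := by
          rw [hsum_fs]
          simp
      _ = 4 * n * L * (g x0 - g xs) := by
          rw [hg]
          simp only []
          field_simp
  have hnonneg : 0 ≤ g x0 - g xs := by linarith [hmin x0]
  calc ∑ i, ‖y0 i - f' i xs‖ ^ 2 = ∑ i, ‖d i - m‖ ^ 2 :=
        Finset.sum_congr rfl (fun i _ => by rw [hterm i])
    _ ≤ ∑ i, ‖d i‖ ^ 2 := hvar
    _ ≤ 4 * n * L * (g x0 - g xs) := hco
    _ ≤ 8 * n * L * (g x0 - g xs) := by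
        have h1 : (0:ℝ) ≤ (n : ℝ) := Nat.cast_nonneg n
        have h2 : (0:ℝ) ≤ (n:ℝ) * L * (g x0 - g xs) :=
          mul_nonneg (mul_nonneg h1 hL) hnonneg
        linarith
end
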